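/- For the symmetric Pareto distribution with shape 2 (density f(x) = 1/(|x|+1)^3, CDF F(x) = 1/(2(1-x)^2) for x<0 and 1 - 1/(2(x+1)^2) for x≥0), and for every c > 0: ∫_{-∞}^{∞} f(z+c) F(z) dz ≥ 1/(4(c+1)^2). -/

import Mathlib

open Real MeasureTheory

/-- Density of the symmetric Pareto distribution with shape 2. -/
noncomputable def sParetoPdf (x : ℝ) : ℝ := 1 / (|x| + 1) ^ 3

/-- CDF of the symmetric Pareto distribution with shape 2. -/
noncomputable def sParetoCdf (x : ℝ) : ℝ :=
  if x < 0 then 1 / (2 * (1 - x) ^ 2) else 1 - 1 / (2 * (x + 1) ^ 2)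

/-!
On `z > 0` the CDF is at least `1/2`, so the integral is at least half the tail mass
`∫_{z > 0} f(z + c) dz = 1 - F(c) = 1 / (2 (c + 1)²)`.
-/

open Set Filter Topology

lemma sParetoPdf_nonneg (x : ℝ) : 0 ≤ sParetoPdf x := by
  unfold sParetoPdf; positivity

lemma integrable_sParetoPdf : Integrable sParetoPdf := by
  refine (integrable_one_add_norm (E := ℝ) (μ := volume) (r := 3) (by norm_num)).congr
    (ae_of_all _ fun x => ?_)
  dsimp only
  rw [Real.norm_eq_abs, Real.rpow_neg (by positivity), show (3 : ℝ) = (3 : ℕ) by norm_num,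
    Real.rpow_natCast, sParetoPdf, add_comm, one_div]

lemma one_div_two_mul_add_one_sq_le_half {x : ℝ} (hx : 0 ≤ x) :
    1 / (2 * (x + 1) ^ 2) ≤ 1 / 2 :=
  one_div_le_one_div_of_le two_pos (by nlinarith)

lemma sParetoCdf_nonneg (x : ℝ) : 0 ≤ sParetoCdf x := by
  unfold sParetoCdf
  split_ifs with hx
  · positivity
  · linarith [one_div_two_mul_add_one_sq_le_half (not_lt.mp hx)]

lemma sParetoCdf_le_one (x : ℝ) : sParetoCdf x ≤ 1 := by
  unfold sParetoCdf
  split_ifs with hx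
  · have := one_div_two_mul_add_one_sq_le_half (neg_nonneg.mpr hx.le)
    rw [neg_add_eq_sub] at this
    linarith
  · have : 0 ≤ 1 / (2 * (x + 1) ^ 2) := by positivity
    linarith

lemma half_le_sParetoCdf {x : ℝ} (hx : 0 ≤ x) : 1 / 2 ≤ sParetoCdf x := by
  rw [sParetoCdf, if_neg (not_lt.mpr hx)]
  linarith [one_div_two_mul_add_one_sq_le_half hx]

lemma measurable_sParetoCdf : Measurable sParetoCdf :=
  Measurable.ite measurableSet_Iio (by fun_prop) (by fun_prop)

lemma hasDerivAt_one_sub_one_div_two_mul_add_one_sq {x : ℝ} (hx : 0 ≤ x) :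
    HasDerivAt (fun y => 1 - 1 / (2 * (y + 1) ^ 2)) (sParetoPdf x) x := by
  have h := ((((hasDerivAt_id' x).add_const 1).fun_pow 2).const_mul 2).fun_inv
    (by positivity) |>.const_sub 1
  simp only [one_div] at h ⊢
  refine h.congr_deriv ?_
  rw [sParetoPdf, abs_of_nonneg hx]
  field_simp
  ring

lemma integral_Ioi_sParetoPdf_comp_add {c : ℝ} (hc : 0 ≤ c) :
    ∫ z in Ioi 0, sParetoPdf (z + c) = 1 / (2 * (c + 1) ^ 2) := by
  have hderiv : ∀ z ∈ Ici (0 : ℝ), HasDerivAt (fun y => 1 - 1 / (2 * (y + c + 1) ^ 2))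
      (sParetoPdf (z + c)) z := fun z hz =>
    (hasDerivAt_one_sub_one_div_two_mul_add_one_sq (add_nonneg hz hc)).comp_add_const z c
  have hlim : Tendsto (fun y : ℝ => 1 - 1 / (2 * (y + c + 1) ^ 2)) atTop (𝓝 1) := by
    have hshift : Tendsto (fun y : ℝ => y + c + 1) atTop atTop :=
      tendsto_atTop_add_const_right _ 1 (tendsto_atTop_add_const_right _ c tendsto_id)
    have hden := ((tendsto_pow_atTop two_ne_zero).comp hshift).const_mul_atTop two_pos
    simpa using hden.inv_tendsto_atTop.const_sub 1
  rw [integral_Ioi_of_hasDerivAt_of_tendsto' hderiv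
    (integrable_sParetoPdf.comp_add_right c).integrableOn hlim]
  ring_nf

theorem stmt5 (c : ℝ) (hc : 0 < c) :
    1 / (4 * (c + 1) ^ 2) ≤ ∫ z : ℝ, sParetoPdf (z + c) * sParetoCdf z := by
  have hpdf : Integrable fun z => sParetoPdf (z + c) := integrable_sParetoPdf.comp_add_right c
  have hprod : Integrable fun z => sParetoPdf (z + c) * sParetoCdf z :=
    hpdf.mul_bdd measurable_sParetoCdf.aestronglyMeasurable (ae_of_all _ fun z => by
      rw [Real.norm_eq_abs, abs_of_nonneg (sParetoCdf_nonneg z)]; exact sParetoCdf_le_one z)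
  calc 1 / (4 * (c + 1) ^ 2) = ∫ z in Ioi 0, sParetoPdf (z + c) * (1 / 2) := by
        rw [integral_mul_const, integral_Ioi_sParetoPdf_comp_add hc.le]
        field_simp; ring
    _ ≤ ∫ z in Ioi 0, sParetoPdf (z + c) * sParetoCdf z :=
        setIntegral_mono_on (hpdf.mul_const _).integrableOn hprod.integrableOn measurableSet_Ioi
          fun z hz => mul_le_mul_of_nonneg_left (half_le_sParetoCdf (le_of_lt hz))
            (sParetoPdf_nonneg _)
    _ ≤ ∫ z, sParetoPdf (z + c) * sParetoCdf z :=
        setIntegral_le_integral hprod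
          (ae_of_all _ fun z => mul_nonneg (sParetoPdf_nonneg _) (sParetoCdf_nonneg z))
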